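/- arXiv:1909.03989 — 5 statements merged into one kernel-verified Lean document; each statement's English description precedes it below -/
import Mathlib

section
/- The derivative dJ_L/ds_B = 1 - cos(φ(s_B))/ν is positive when φ(s_B) > arccos(ν), zero when φ(s_B) = arccos(ν), and negative when φ(s_B) < arccos(ν). Consequently, since φ is non-increasing, the maximizer s_L of J_L over the directly reachable arc is the unique point (on a C¹ perimeter) where φ(s_L) = arccos(ν). -/
open Real Set

/-- The derivative `dJ_L/ds_B = 1 - cos(φ(s_B))/ν` is positive when
`φ(s_B) > arccos ν`, zero when `φ(s_B) = arccos ν`, and negative when `φ(s_B) < arccos ν`.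
Consequently, since `φ` is (strictly) decreasing, the point `s_L` where `φ(s_L) = arccos ν`
is the unique maximizer of `J_L` over the directly reachable arc. -/
theorem JL_sign_and_unique_maximizer
    (ν : ℝ) (hν : ν ∈ Set.Ioc (0:ℝ) 1)
    (a b sL : ℝ) (hab : a ≤ b)
    (JL φ : ℝ → ℝ)
    (hφrange : ∀ s ∈ Set.Icc a b, φ s ∈ Set.Icc 0 π)
    (hderiv : ∀ s ∈ Set.Icc a b, HasDerivAt JL (1 - Real.cos (φ s) / ν) s)
    (hanti : StrictAntiOn φ (Set.Icc a b))
    (hsL : sL ∈ Set.Icc a b) (hφL : φ sL = Real.arccos ν) :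
    (∀ s ∈ Set.Icc a b,
      (Real.arccos ν < φ s → 0 < 1 - Real.cos (φ s) / ν) ∧
      (φ s = Real.arccos ν → 1 - Real.cos (φ s) / ν = 0) ∧
      (φ s < Real.arccos ν → 1 - Real.cos (φ s) / ν < 0)) ∧
    (∀ s ∈ Set.Icc a b, s ≠ sL → JL s < JL sL) := by
  obtain ⟨hν0, hν1⟩ := hν
  have harc : Real.arccos ν ∈ Set.Icc 0 π := ⟨Real.arccos_nonneg ν, Real.arccos_le_pi ν⟩
  have hcosarc : Real.cos (Real.arccos ν) = ν := Real.cos_arccos (by linarith) hν1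
  have key : ∀ s ∈ Set.Icc a b,
      (Real.arccos ν < φ s → 0 < 1 - Real.cos (φ s) / ν) ∧
      (φ s = Real.arccos ν → 1 - Real.cos (φ s) / ν = 0) ∧
      (φ s < Real.arccos ν → 1 - Real.cos (φ s) / ν < 0) := by
    intro s hs
    have hφs := hφrange s hs
    refine ⟨?_, ?_, ?_⟩
    · intro h
      have : Real.cos (φ s) < ν := by
        have := Real.strictAntiOn_cos harc hφs h
        rwa [hcosarc] at this
      have : Real.cos (φ s) / ν < 1 := (div_lt_one hν0).2 this
      linarith
    · intro h
      rw [h, hcosarc, div_self (ne_of_gt hν0)]; ring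
    · intro h
      have : ν < Real.cos (φ s) := by
        have := Real.strictAntiOn_cos hφs harc h
        rwa [hcosarc] at this
      have : 1 < Real.cos (φ s) / ν := (one_lt_div hν0).2 this
      linarith
  refine ⟨key, ?_⟩
  -- continuity of JL on Icc a b
  have hcont : ContinuousOn JL (Set.Icc a b) := fun s hs =>
    (hderiv s hs).continuousAt.continuousWithinAt
  have hmono : StrictMonoOn JL (Set.Icc a sL) := by
    apply strictMonoOn_of_deriv_pos (convex_Icc a sL)
      (hcont.mono (Set.Icc_subset_Icc le_rfl hsL.2))
    intro x hx
    rw [interior_Icc] at hx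
    have hx' : x ∈ Set.Icc a b := ⟨le_of_lt hx.1, le_trans (le_of_lt hx.2) hsL.2⟩
    rw [(hderiv x hx').deriv]
    refine (key x hx').1 ?_
    rw [← hφL]
    exact hanti hx' hsL hx.2
  have hantiJ : StrictAntiOn JL (Set.Icc sL b) := by
    apply strictAntiOn_of_deriv_neg (convex_Icc sL b)
      (hcont.mono (Set.Icc_subset_Icc hsL.1 le_rfl))
    intro x hx
    rw [interior_Icc] at hx
    have hx' : x ∈ Set.Icc a b := ⟨le_trans hsL.1 (le_of_lt hx.1), le_of_lt hx.2⟩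
    rw [(hderiv x hx').deriv]
    refine (key x hx').2.2 ?_
    rw [← hφL]
    exact hanti hsL hx' hx.1
  intro s hs hne
  rcases lt_or_gt_of_ne hne with h | h
  · exact hmono ⟨hs.1, le_of_lt h⟩ ⟨hsL.1, le_rfl⟩ h
  · exact hantiJ ⟨le_rfl, hsL.2⟩ ⟨le_of_lt h, hs.2⟩ h
end

section
/- For unit vectors u, v ∈ ℝ² with u ≠ -v, and any vector w with ‖w‖ ≤ ν, one has |(u - v) · w| < 2ν. Consequently, in the stabilization proof, with e = J_L* - J_R* and defender control ω_D = sgn(e), the derivative satisfies (ν/2) d(e²)/dt = |e|·((u - v)·u_A − 2ν) < 0 for e ≠ 0, so e = 0 is stabilized. -/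
open Real Set
open scoped InnerProductSpace

noncomputable section

abbrev E2 := EuclideanSpace ℝ (Fin 2)

/-- For unit vectors `u ≠ -v` and any `w` with `‖w‖ ≤ ν`, one has
`|(u - v)·w| < 2ν`. Consequently, with error `e = J_L* - J_R*`, error dynamics
`ν·ė = (u - v)·u_A − 2ν·sgn(e)` (defender control `ω_D = sgn e`), and `e ≠ 0`, we get
`(ν/2)·d(e²)/dt < 0`, so `e = 0` is stabilized. -/
theorem pincer_error_stabilization
    (ν : ℝ) (hν : 0 < ν)
    (u v : E2) (hu : ‖u‖ = 1) (hv : ‖v‖ = 1) (huv : u ≠ -v)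
    (uA : E2) (huA : ‖uA‖ ≤ ν)
    (e e' : ℝ → ℝ) (t : ℝ)
    (hder : HasDerivAt e (e' t) t)
    (hdyn : ν * e' t = ⟪u - v, uA⟫_ℝ - 2 * ν * Real.sign (e t))
    (hne : e t ≠ 0) :
    (∀ w : E2, ‖w‖ ≤ ν → |⟪u - v, w⟫_ℝ| < 2 * ν) ∧
    (ν / 2) * (2 * e t * e' t) < 0 := by
  have hunv : ‖-v‖ = 1 := by simpa using hv
  have hinner : ⟪u, -v⟫_ℝ < 1 := by
    rcases lt_or_eq_of_le ((real_inner_le_norm u (-v)).trans (by rw [hu, hunv, one_mul])) with h | h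
    · exact h
    · exact absurd ((inner_eq_one_iff_of_norm_eq_one (𝕜 := ℝ) hu hunv).mp h) huv
  have hgt : (-1 : ℝ) < ⟪u, v⟫_ℝ := by
    have : ⟪u, -v⟫_ℝ = -⟪u, v⟫_ℝ := by simp
    linarith [this ▸ hinner]
  have hnorm : ‖u - v‖ < 2 := by
    have hsq : ‖u - v‖ ^ 2 = 2 - 2 * ⟪u, v⟫_ℝ := by
      rw [norm_sub_sq_real, hu, hv]; ring
    nlinarith [norm_nonneg (u - v)]
  have key : ∀ w : E2, ‖w‖ ≤ ν → |⟪u - v, w⟫_ℝ| < 2 * ν := by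
    intro w hw
    calc |⟪u - v, w⟫_ℝ| ≤ ‖u - v‖ * ‖w‖ := abs_real_inner_le_norm _ _
      _ ≤ ‖u - v‖ * ν := by
          exact mul_le_mul_of_nonneg_left hw (norm_nonneg _)
      _ < 2 * ν := by nlinarith
  refine ⟨key, ?_⟩
  have hA := key uA huA
  have hsign : e t * Real.sign (e t) = |e t| := by
    rcases lt_or_gt_of_ne hne with h | h
    · rw [Real.sign_of_neg h, abs_of_neg h]; ring
    · rw [Real.sign_of_pos h, abs_of_pos h]; ring
  have habs : 0 < |e t| := abs_pos.mpr hne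
  have h1 : e t * ⟪u - v, uA⟫_ℝ ≤ |e t| * |⟪u - v, uA⟫_ℝ| := by
    calc e t * ⟪u - v, uA⟫_ℝ ≤ |e t * ⟪u - v, uA⟫_ℝ| := le_abs_self _
      _ = |e t| * |⟪u - v, uA⟫_ℝ| := abs_mul _ _
  have heq : (ν / 2) * (2 * e t * e' t) = e t * (ν * e' t) := by ring
  rw [heq, hdyn]
  have : e t * (⟪u - v, uA⟫_ℝ - 2 * ν * Real.sign (e t))
      = e t * ⟪u - v, uA⟫_ℝ - 2 * ν * |e t| := by
    rw [mul_sub]; rw [show e t * (2 * ν * Real.sign (e t)) = 2 * ν * (e t * Real.sign (e t)) by ring, hsign]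
  rw [this]
  nlinarith
end
end

section
/- Parameterize the left barrier curve by x_bar(s) = γ(s) − ν·d_ccw(s_D, s)·R_{φ*}·γ'(s), where R_{φ*} is rotation by φ* = arccos(ν) counter-clockwise. Then the tangent vector B = dx_bar/ds is orthogonal to the unit vector from x_bar toward γ(s) — i.e., B · (γ(s) − x_A)/‖γ(s) − x_A‖ = 0 for x_A on the barrier. -/
/-! Since `γ s - xbar s = ν (s - sD) • R (γ' s)`, it suffices that `B ⊥ R (γ' s)`. Expanding `B`:
`⟪γ', Rγ'⟫ = ν` by the choice of angle, `‖Rγ'‖ = 1`, and `⟪Rγ'', Rγ'⟫ = ⟪γ'', γ'⟫ = 0` because `γ'`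
has constant length, so `ν - ν · 1 - 0 = 0`. -/

open Real Set
open scoped InnerProductSpace

noncomputable section

theorem HasDerivAt.sub_affine_smul_clm {F G : Type*} [NormedAddCommGroup F] [NormedSpace ℝ F]
    [NormedAddCommGroup G] [NormedSpace ℝ G] {γ : ℝ → G} {T : ℝ → F} {γ' : G} {T' : F} {s : ℝ}
    (hγ : HasDerivAt γ γ' s) (hT : HasDerivAt T T' s)
    (L : F →L[ℝ] G) (a b : ℝ) :
    HasDerivAt (fun τ => γ τ - (a * (τ - b)) • L (T τ))
      (γ' - a • L (T s) - (a * (s - b)) • L T') s := by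
  have haff : HasDerivAt (fun τ => a * (τ - b)) a s := by
    simpa using ((hasDerivAt_id s).sub_const b).const_mul a
  refine (hγ.sub (haff.smul (L.hasFDerivAt.comp_hasDerivAt s hT))).congr_deriv ?_
  rw [Function.comp_apply, sub_sub, add_comm]

section

variable {F : Type*} [NormedAddCommGroup F] [InnerProductSpace ℝ F]

theorem inner_hasDerivAt_eq_zero_of_norm_eq_const {f : ℝ → F} {f' : F} {x c : ℝ}
    (hnorm : ∀ t, ‖f t‖ = c) (hf : HasDerivAt f f' x) : ⟪f x, f'⟫_ℝ = 0 := by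
  have hconst : HasDerivAt (‖f ·‖ ^ 2) 0 x := by
    simpa only [hnorm] using hasDerivAt_const x (c ^ 2)
  linarith [hf.norm_sq.unique hconst]

theorem inner_sub_smul_sub_smul_map_eq_zero (R : F ≃ₗᵢ[ℝ] F) {ν c : ℝ}
    (hR : ∀ v, ⟪R v, v⟫_ℝ = ν * ‖v‖ ^ 2) {T N : F} (hT : ‖T‖ = 1) (hTN : ⟪T, N⟫_ℝ = 0) :
    ⟪T - ν • R T - c • R N, R T⟫_ℝ = 0 := by
  have hTRT : ⟪T, R T⟫_ℝ = ν := by rw [real_inner_comm, hR, hT]; ring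
  have hRT : ⟪R T, R T⟫_ℝ = 1 := by rw [real_inner_self_eq_norm_sq, R.norm_map, hT]; norm_num
  have hRN : ⟪R N, R T⟫_ℝ = 0 := by rw [R.inner_map_map, real_inner_comm, hTN]
  rw [inner_sub_left, inner_sub_left, inner_smul_left, inner_smul_left, hTRT, hRT, hRN]
  simp

end

theorem barrier_tangent_orthogonal_general
    (ν : ℝ) (hν : ν ∈ Set.Ioo (0:ℝ) 1)
    (γ γT γTT : ℝ → E2)
    (hγ : ∀ s, HasDerivAt γ (γT s) s)
    (hγT : ∀ s, HasDerivAt γT (γTT s) s)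
    (hunit : ∀ s, ‖γT s‖ = 1)
    -- `R` is rotation by the angle `φ* = arccos ν`
    (R : E2 ≃ₗᵢ[ℝ] E2)
    (hR : ∀ v : E2, ⟪(R v : E2), v⟫_ℝ = Real.cos (Real.arccos ν) * ‖v‖ ^ 2)
    (sD s : ℝ)
    (xbar : ℝ → E2)
    (hxbar : ∀ τ, xbar τ = γ τ - (ν * (τ - sD)) • R (γT τ))
    (B : E2)
    (hB : B = γT s - ν • R (γT s) - (ν * (s - sD)) • R (γTT s)) :
    HasDerivAt xbar B s ∧
    ⟪B, (‖γ s - xbar s‖)⁻¹ • (γ s - xbar s)⟫_ℝ = 0 := by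
  rw [Real.cos_arccos (by linarith [hν.1]) hν.2.le] at hR
  have hderiv : HasDerivAt xbar B s := by
    rw [funext hxbar, hB]
    exact (hγ s).sub_affine_smul_clm (hγT s) (R : E2 →L[ℝ] E2) ν sD
  have hTN : ⟪γT s, γTT s⟫_ℝ = 0 := inner_hasDerivAt_eq_zero_of_norm_eq_const hunit (hγT s)
  have hBR : ⟪B, R (γT s)⟫_ℝ = 0 := hB ▸ inner_sub_smul_sub_smul_map_eq_zero R hR (hunit s) hTN
  have hvec : γ s - xbar s = (ν * (s - sD)) • R (γT s) := by rw [hxbar]; abel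
  refine ⟨hderiv, ?_⟩
  rw [hvec, inner_smul_right, inner_smul_right, hBR, mul_zero, mul_zero]

/-- Parameterize the left barrier by
`x_bar(s) = γ(s) − ν·(s − s_D)·R(γ'(s))`, where `R` is the (linear isometric) rotation by
`φ* = arccos ν`. Then the tangent vector `B = dx_bar/ds` is orthogonal to the unit vector
from `x_bar(s)` toward `γ(s)`. -/
theorem barrier_tangent_orthogonal
    (ν : ℝ) (hν : ν ∈ Set.Ioo (0:ℝ) 1)
    (γ γT γTT : ℝ → E2)
    (hγ : ∀ s, HasDerivAt γ (γT s) s)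
    (hγT : ∀ s, HasDerivAt γT (γTT s) s)
    (hunit : ∀ s, ‖γT s‖ = 1)
    -- `R` is rotation by the angle `φ* = arccos ν`
    (R : E2 ≃ₗᵢ[ℝ] E2)
    (hR : ∀ v : E2, ⟪(R v : E2), v⟫_ℝ = Real.cos (Real.arccos ν) * ‖v‖ ^ 2)
    (sD s : ℝ) (hs : sD < s)
    (xbar : ℝ → E2)
    (hxbar : ∀ τ, xbar τ = γ τ - (ν * (τ - sD)) • R (γT τ))
    (B : E2)
    (hB : B = γT s - ν • R (γT s) - (ν * (s - sD)) • R (γTT s)) :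
    HasDerivAt xbar B s ∧
    ⟪B, (‖γ s - xbar s‖)⁻¹ • (γ s - xbar s)⟫_ℝ = 0 :=
  barrier_tangent_orthogonal_general ν hν γ γT γTT hγ hγT hunit R hR sD s xbar hxbar B hB
end
end

section
/- In the midpoint region of the two vs. one game, with β = cos(φ(s_mid))/ν and |β| < 1, the derivative of J_mid = (1/2)d_ccw(s_{D_i},s_{D_j}) − ‖γ(s_mid) − x_A‖/ν equals (1/2)((1−β)ω_{D_j} − (1+β)ω_{D_i}) + (1/ν)·û·u_A, where û is the unit vector from x_A to γ(s_mid). Consequently (ω_{D_i}, ω_{D_j}) = (1,−1) minimizes and u_A = ν·û maximizes this expression, and at the saddle point the derivative is zero: (1/2)(−(1−β) − (1+β)) + 1 = 0. -/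
/- The defenders' arc term has rate `(ω_j - ω_i)/2`, while the intruder's distance to `γ(s_mid)`
changes at rate `⟪û, ṡ_mid γ' - u_A⟫` with `ṡ_mid = (ω_i + ω_j)/2`; writing `⟪û, γ'⟫ = νβ` and
regrouping gives the stated rate. It is linear in `(ω_i, ω_j)` with coefficients `-(1+β)/2 < 0` and
`(1-β)/2 > 0`, so it is minimized at the corner `(1, -1)`; in `u_A` it is `⟪û, u_A⟫/ν`, maximized
at `u_A = ν û` by Cauchy–Schwarz. At that saddle the rate is `-1 + 1 = 0`. -/

open Real Set
open scoped InnerProductSpace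

noncomputable section

section InnerProductSpace

variable {F : Type*} [NormedAddCommGroup F] [InnerProductSpace ℝ F]

theorem HasDerivAt.norm {f : ℝ → F} {f' : F} {t : ℝ} (hf : HasDerivAt f f' t) (h0 : f t ≠ 0) :
    HasDerivAt (fun τ => ‖f τ‖) ⟪‖f t‖⁻¹ • f t, f'⟫_ℝ t := by
  have hpos : 0 < ‖f t‖ := norm_pos_iff.mpr h0
  have hsqrt := (Real.hasDerivAt_sqrt (by positivity : ‖f t‖ ^ 2 ≠ 0)).comp t hf.norm_sq
  simp only [Function.comp_def, Real.sqrt_sq (norm_nonneg _)] at hsqrt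
  refine hsqrt.congr_deriv ?_
  rw [real_inner_smul_left]
  field_simp

theorem hasDerivAt_half_arc_sub_norm_midpoint_div {γ : ℝ → F} {γT : F} {sDi sDj : ℝ → ℝ}
    {xA : ℝ → F} {uA : F} {ωi ωj ν t : ℝ}
    (hγ : HasDerivAt γ γT ((sDi t + sDj t) / 2))
    (hi : HasDerivAt sDi ωi t) (hj : HasDerivAt sDj ωj t) (hx : HasDerivAt xA uA t)
    (hne : γ ((sDi t + sDj t) / 2) ≠ xA t) :
    let u := ‖γ ((sDi t + sDj t) / 2) - xA t‖⁻¹ • (γ ((sDi t + sDj t) / 2) - xA t)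
    let β := ⟪u, γT⟫_ℝ / ν
    HasDerivAt (fun τ => (sDj τ - sDi τ) / 2 - ‖γ ((sDi τ + sDj τ) / 2) - xA τ‖ / ν)
      ((1/2) * ((1 - β) * ωj - (1 + β) * ωi) + (1/ν) * ⟪u, uA⟫_ℝ) t := by
  intro u β
  have hmid : HasDerivAt (fun τ => (sDi τ + sDj τ) / 2) ((ωi + ωj) / 2) t :=
    (hi.add hj).div_const 2
  have hdist : HasDerivAt (fun τ => ‖γ ((sDi τ + sDj τ) / 2) - xA τ‖)
      ⟪u, ((ωi + ωj) / 2) • γT - uA⟫_ℝ t :=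
    ((hγ.scomp t hmid).sub hx).norm (sub_ne_zero.mpr hne)
  refine (((hj.sub hi).div_const 2).sub (hdist.div_const ν)).congr_deriv ?_
  simp only [β, inner_sub_right, real_inner_smul_right]
  ring

theorem real_inner_le_inner_smul_self {u w : F} {ν : ℝ} (hu : ‖u‖ = 1) (hw : ‖w‖ ≤ ν) :
    ⟪u, w⟫_ℝ ≤ ⟪u, ν • u⟫_ℝ :=
  calc ⟪u, w⟫_ℝ ≤ ‖u‖ * ‖w‖ := real_inner_le_norm u w
    _ ≤ ν := by rwa [hu, one_mul]
    _ = ⟪u, ν • u⟫_ℝ := by rw [real_inner_smul_right, real_inner_self_eq_norm_sq, hu]; ring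

end InnerProductSpace

theorem half_rate_corner_le {β wi wj : ℝ} (hβ : |β| ≤ 1) (hwi : wi ∈ Icc (-1 : ℝ) 1)
    (hwj : wj ∈ Icc (-1 : ℝ) 1) :
    (1/2) * ((1 - β) * (-1) - (1 + β) * 1) ≤ (1/2) * ((1 - β) * wj - (1 + β) * wi) := by
  obtain ⟨hβl, hβr⟩ := abs_le.mp hβ
  have hj : (1 - β) * (-1) ≤ (1 - β) * wj := mul_le_mul_of_nonneg_left hwj.1 (by linarith)
  have hi : (1 + β) * wi ≤ (1 + β) * 1 := mul_le_mul_of_nonneg_left hwi.2 (by linarith)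
  linarith

theorem Jmid_derivative_saddle_general
    (ν : ℝ)
    (γ γT : ℝ → E2)
    (hγ : ∀ s, HasDerivAt γ (γT s) s)
    (sDi sDj : ℝ → ℝ) (xA uA : ℝ → E2) (ωi ωj : ℝ) (t : ℝ)
    (hi : HasDerivAt sDi ωi t) (hj : HasDerivAt sDj ωj t)
    (hx : HasDerivAt xA (uA t) t)
    (smid : ℝ → ℝ) (hsmid : ∀ τ, smid τ = (sDi τ + sDj τ) / 2)
    (hne : γ (smid t) ≠ xA t)
    (u : E2) (hu : u = (‖γ (smid t) - xA t‖)⁻¹ • (γ (smid t) - xA t))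
    (β : ℝ) (hβdef : β = ⟪u, γT (smid t)⟫_ℝ / ν)
    (hβ : |β| < 1) :
    HasDerivAt (fun τ => (sDj τ - sDi τ) / 2 - ‖γ (smid τ) - xA τ‖ / ν)
      ((1/2) * ((1 - β) * ωj - (1 + β) * ωi) + (1/ν) * ⟪u, uA t⟫_ℝ) t ∧
    (∀ wi ∈ Set.Icc (-1:ℝ) 1, ∀ wj ∈ Set.Icc (-1:ℝ) 1,
      (1/2) * ((1 - β) * (-1) - (1 + β) * 1) ≤ (1/2) * ((1 - β) * wj - (1 + β) * wi)) ∧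
    (∀ w : E2, ‖w‖ ≤ ν → ⟪u, w⟫_ℝ ≤ ⟪u, ν • u⟫_ℝ) ∧
    (1/2) * (-(1 - β) - (1 + β)) + 1 = 0 := by
  obtain rfl : smid = fun τ => (sDi τ + sDj τ) / 2 := funext hsmid
  have hu_norm : ‖u‖ = 1 := hu ▸ norm_smul_inv_norm (sub_ne_zero.mpr hne)
  subst hu hβdef
  exact ⟨hasDerivAt_half_arc_sub_norm_midpoint_div (hγ _) hi hj hx hne,
    fun wi hwi wj hwj => half_rate_corner_le hβ.le hwi hwj,
    fun w hw => real_inner_le_inner_smul_self hu_norm hw, by ring⟩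

/-- In the midpoint region of the two vs. one game, with
`β = cos(φ(s_mid))/ν` and `|β| < 1`, the derivative of
`J_mid = (1/2)·d(s_{D_i},s_{D_j}) − ‖γ(s_mid) − x_A‖/ν` equals
`(1/2)((1−β)ω_{D_j} − (1+β)ω_{D_i}) + (1/ν)·û·u_A` where `û` is the unit vector from `x_A`
to `γ(s_mid)`. `(ω_{D_i}, ω_{D_j}) = (1,−1)` minimizes and `u_A = ν·û` maximizes this
expression, and at the saddle point the derivative is zero. -/
theorem Jmid_derivative_saddle
    (ν : ℝ) (hν : ν ∈ Set.Ioc (0:ℝ) 1)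
    (γ γT : ℝ → E2)
    (hγ : ∀ s, HasDerivAt γ (γT s) s)
    (hunit : ∀ s, ‖γT s‖ = 1)
    (sDi sDj : ℝ → ℝ) (xA uA : ℝ → E2) (ωi ωj : ℝ) (t : ℝ)
    (hi : HasDerivAt sDi ωi t) (hj : HasDerivAt sDj ωj t)
    (hωi : |ωi| ≤ 1) (hωj : |ωj| ≤ 1)
    (hx : HasDerivAt xA (uA t) t)
    (smid : ℝ → ℝ) (hsmid : ∀ τ, smid τ = (sDi τ + sDj τ) / 2)
    (hne : γ (smid t) ≠ xA t)
    (u : E2) (hu : u = (‖γ (smid t) - xA t‖)⁻¹ • (γ (smid t) - xA t))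
    (β : ℝ) (hβdef : β = ⟪u, γT (smid t)⟫_ℝ / ν)
    (hβ : |β| < 1) :
    HasDerivAt (fun τ => (sDj τ - sDi τ) / 2 - ‖γ (smid τ) - xA τ‖ / ν)
      ((1/2) * ((1 - β) * ωj - (1 + β) * ωi) + (1/ν) * ⟪u, uA t⟫_ℝ) t ∧
    (∀ wi ∈ Set.Icc (-1:ℝ) 1, ∀ wj ∈ Set.Icc (-1:ℝ) 1,
      (1/2) * ((1 - β) * (-1) - (1 + β) * 1) ≤ (1/2) * ((1 - β) * wj - (1 + β) * wi)) ∧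
    (∀ w : E2, ‖w‖ ≤ ν → ⟪u, w⟫_ℝ ≤ ⟪u, ν • u⟫_ℝ) ∧
    (1/2) * (-(1 - β) - (1 + β)) + 1 = 0 :=
  Jmid_derivative_saddle_general ν γ γT hγ sDi sDj xA uA ωi ωj t hi hj hx smid hsmid hne u hu β
    hβdef hβ

end
end

section
/- For the intruder in the two vs. one game, the value V_{ij} is attained as the maximum of J_{ij}(s_B) = min{d_ccw(s_{D_i}, s_B), d_ccw(s_B, s_{D_j})} − ‖γ(s_B) − x_A‖/ν over s_B in the arc from s_{D_i} to s_{D_j}: if the left breaching point s_L lies in [s_{D_i}, s_mid) then the max equals J_L*(s_{D_i}, x_A); if the right breaching point s_R lies in (s_mid, s_{D_j}] then the max equals J_R*(s_{D_j}, x_A); otherwise the max equals J_mid = (1/2)d_ccw(s_{D_i},s_{D_j}) − ‖γ(s_mid) − x_A‖/ν. -/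
open Real Set

noncomputable section

/-- In the two vs. one game (in local arc-length coordinates the defenders sit
at `a = s_{D_i}` and `b = s_{D_j}`, with midpoint `m`), the value `V_{ij}` is attained as
the maximum over breaching points `s_B ∈ [a,b]` of
`J_{ij}(s_B) = min{s_B − a, b − s_B} − ‖γ(s_B) − x‖/ν`:
if `s_L ∈ [a, m)` the max equals `J_L*(s_{D_i}, x) = J_L(s_L)`; if `s_R ∈ (m, b]` the max
equals `J_R*(s_{D_j}, x) = J_R(s_R)`; otherwise the max equals
`J_mid = (b−a)/2 − ‖γ(m) − x‖/ν`. Here `J_L`, `J_R` are unimodal with peaks at the left and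
right breaching points `s_L`, `s_R` (and `s_R ≤ s_L`). -/
theorem two_vs_one_value_cases
    (ν : ℝ) (hν : ν ∈ Set.Ioc (0:ℝ) 1)
    (γ : ℝ → E2) (x : E2)
    (a b : ℝ) (hab : a < b) (m : ℝ) (hm : m = (a + b) / 2)
    (J JL JR : ℝ → ℝ)
    (hJ : ∀ s, J s = min (s - a) (b - s) - ‖γ s - x‖ / ν)
    (hJL : ∀ s, JL s = (s - a) - ‖γ s - x‖ / ν)
    (hJR : ∀ s, JR s = (b - s) - ‖γ s - x‖ / ν)
    (sL sR : ℝ) (hsL : sL ∈ Set.Icc a b) (hsR : sR ∈ Set.Icc a b) (hLR : sR ≤ sL)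
    (hL1 : MonotoneOn JL (Set.Icc a sL)) (hL2 : AntitoneOn JL (Set.Icc sL b))
    (hR1 : MonotoneOn JR (Set.Icc a sR)) (hR2 : AntitoneOn JR (Set.Icc sR b)) :
    (sL ∈ Set.Ico a m → IsMaxOn J (Set.Icc a b) sL ∧ J sL = JL sL) ∧
    (sR ∈ Set.Ioc m b → IsMaxOn J (Set.Icc a b) sR ∧ J sR = JR sR) ∧
    (sL ∉ Set.Ico a m → sR ∉ Set.Ioc m b →
      IsMaxOn J (Set.Icc a b) m ∧ J m = (b - a) / 2 - ‖γ m - x‖ / ν) := by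
  have hJ_le_JL : ∀ s, J s ≤ JL s := by
    intro s; rw [hJ, hJL]
    exact sub_le_sub_right (min_le_left _ _) _
  have hJ_le_JR : ∀ s, J s ≤ JR s := by
    intro s; rw [hJ, hJR]
    exact sub_le_sub_right (min_le_right _ _) _
  have hJL_eq : ∀ s, s ≤ m → J s = JL s := by
    intro s hs; rw [hJ, hJL, min_eq_left (by rw [hm] at hs; linarith)]
  have hJR_eq : ∀ s, m ≤ s → J s = JR s := by
    intro s hs; rw [hJ, hJR, min_eq_right (by rw [hm] at hs; linarith)]
  refine ⟨?_, ?_, ?_⟩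
  · intro hL
    have heq : J sL = JL sL := hJL_eq sL (le_of_lt hL.2)
    refine ⟨fun s hs => ?_, heq⟩
    simp only [Set.mem_setOf_eq, heq]
    rcases le_total s sL with h | h
    · exact (hJ_le_JL s).trans (hL1 ⟨hs.1, h⟩ ⟨hsL.1, le_refl _⟩ h)
    · exact (hJ_le_JL s).trans (hL2 ⟨le_refl _, hsL.2⟩ ⟨h, hs.2⟩ h)
  · intro hR
    have heq : J sR = JR sR := hJR_eq sR (le_of_lt hR.1)
    refine ⟨fun s hs => ?_, heq⟩
    simp only [Set.mem_setOf_eq, heq]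
    rcases le_total s sR with h | h
    · exact (hJ_le_JR s).trans (hR1 ⟨hs.1, h⟩ ⟨hsR.1, le_refl _⟩ h)
    · exact (hJ_le_JR s).trans (hR2 ⟨le_refl _, hsR.2⟩ ⟨h, hs.2⟩ h)
  · intro hL hR
    have hmL : m ≤ sL := by
      by_contra h; exact hL ⟨hsL.1, lt_of_not_ge h⟩
    have hRm : sR ≤ m := by
      by_contra h; exact hR ⟨lt_of_not_ge h, hsR.2⟩
    have hma : a ≤ m := by rw [hm]; linarith
    have hmb : m ≤ b := by rw [hm]; linarith
    have heq : J m = (b - a) / 2 - ‖γ m - x‖ / ν := by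
      rw [hJ]
      have : min (m - a) (b - m) = (b - a) / 2 := by rw [hm]; ring_nf; simp
      rw [this]
    constructor
    · intro s hs
      simp only [Set.mem_setOf_eq]
      rcases le_total s m with h | h
      · calc J s ≤ JL s := hJ_le_JL s
          _ ≤ JL m := hL1 ⟨hs.1, h.trans hmL⟩ ⟨hma, hmL⟩ h
          _ = J m := (hJL_eq m le_rfl).symm
      · calc J s ≤ JR s := hJ_le_JR s
          _ ≤ JR m := hR2 ⟨hRm, hmb⟩ ⟨hRm.trans h, hs.2⟩ h
          _ = J m := (hJR_eq m le_rfl).symm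
    · exact heq

end
end
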